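/- arXiv:0709.0239 — 3 statements merged into one kernel-verified Lean document; each statement's English description precedes it below -/
import Mathlib

section
/- The map sending x in X to the restriction (x_{k,l})_{(k,l) in P} is a bijection (in fact a group isomorphism) from X onto (Z/2Z)^P, where P = {(k,-k) : k in Z} ∪ {(l,0) : l in N, l ≥ 1}. -/
open MeasureTheory Filter

/-- Configurations: `ℤ²`-indexed families of elements of `ℤ/2ℤ`. -/
abbrev Config := ℤ → ℤ → ZMod 2

/-- The three-dot relation. -/
def threeDot (x : Config) : Prop :=
  ∀ k l : ℤ, x k l + x (k + 1) l + x k (l + 1) = 0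

/-- The three-dot system `X`. -/
def Xset : Set Config := {x | threeDot x}

/-- The `ℤ²`-shift action: `shift k l x = T^k S^l x`. -/
def shift (k l : ℤ) (x : Config) : Config := fun a b => x (a + k) (b + l)

/-- The shift `T`. -/
def Tm : Config → Config := shift 1 0

/-- The shift `S`. -/
def Sm : Config → Config := shift 0 1

/-- `Y` : points of `X` with coordinate `1` at the origin. -/
def Yset : Set Config := {x | threeDot x ∧ x 0 0 = 1}

/-- The map `σ : Y → Y`, extended to all configurations:
it equals `Tx` if `Tx` has a `1` at the origin, and `Sx` otherwise. -/
def sig (x : Config) : Config := if x 1 0 = 1 then Tm x else Sm x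

/-- `Z` : points of `Y` with σ-antecedents of every depth (equivalently,
infinitely many σ-antecedents). -/
def Zset : Set Config := {x | x ∈ Yset ∧ ∀ n : ℕ, ∃ y ∈ Yset, sig^[n] y = x}

/-- `Z₂` : points of `Z` having two distinct σ-preimages in `Z`. -/
def Z2set : Set Config :=
  {x | x ∈ Zset ∧ ∃ y z, y ≠ z ∧ y ∈ Zset ∧ z ∈ Zset ∧ sig y = x ∧ sig z = x}

/-- The σ-component of a point `x` of `Y`: points of the `ℤ²`-orbit of `x`
lying in `Y` whose forward σ-trajectory meets that of `x`. -/
def sigComp (x : Config) : Set Config :=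
  {y | (∃ k l : ℤ, y = shift k l x) ∧ y ∈ Yset ∧ ∃ p q : ℕ, sig^[p] x = sig^[q] y}

/-- Aperiodicity of a configuration for the `ℤ²`-action. -/
def Aperiodic (x : Config) : Prop := ∀ k l : ℤ, shift k l x = x → k = 0 ∧ l = 0

/-- The set `P`: anti-diagonal plus the positive horizontal half-line. -/
def Pset : Set (ℤ × ℤ) := {p | p.2 = -p.1} ∪ {p | 1 ≤ p.1 ∧ p.2 = 0}

namespace Stmt1Aux

lemma zsolve1 : ∀ a b c : ZMod 2, a + b + c = 0 → b = 0 → c = 0 → a = 0 := by decide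
lemma zsolve2 : ∀ a b c : ZMod 2, a + b + c = 0 → a = 0 → c = 0 → b = 0 := by decide
lemma zsolve3 : ∀ a b c : ZMod 2, a + b + c = 0 → a = 0 → b = 0 → c = 0 := by decide
lemma zeq : ∀ a b : ZMod 2, a + b = 0 → a = b := by decide
lemma zeq' : ∀ a b : ZMod 2, a = b → a + b = 0 := by decide
lemma zsum : ∀ a b c d e f : ZMod 2, a + b + c = 0 → d + e + f = 0 →
    (a + d) + (b + e) + (c + f) = 0 := by decide
lemma zrel1 : ∀ a b c : ZMod 2, b + c = a → a + c + b = 0 := by decide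
lemma zrel2 : ∀ a b : ZMod 2, (a + b) + b + a = 0 := by decide

/-- Key uniqueness lemma: a three-dot configuration vanishing on `P` is zero. -/
lemma zero_of (z : Config) (hz : threeDot z)
    (h0 : ∀ k : ℤ, z k (-k) = 0) (h1 : ∀ l : ℤ, 1 ≤ l → z l 0 = 0) :
    ∀ k l : ℤ, z k l = 0 := by
  have A : ∀ n : ℕ, ∀ k : ℤ, z k ((n : ℤ) - k) = 0 := by
    intro n
    induction n with
    | zero => intro k; simpa using h0 k
    | succ n ih =>
      have U : ∀ j : ℕ, z ((n : ℤ) + 1 - j) j = 0 := by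
        intro j
        induction j with
        | zero => simpa using h1 ((n : ℤ) + 1) (by omega)
        | succ j ihj =>
          have hrel := hz ((n : ℤ) - j) (j : ℤ)
          have e1 : z ((n : ℤ) - j) j = 0 := by
            have := ih ((n : ℤ) - j)
            rwa [show (n : ℤ) - ((n : ℤ) - j) = j by ring] at this
          have e2 : z ((n : ℤ) - j + 1) j = 0 := by
            rwa [show (n : ℤ) + 1 - j = (n : ℤ) - j + 1 by ring] at ihj
          have e3 := zsolve3 _ _ _ hrel e1 e2
          push_cast
          rwa [show (n : ℤ) + 1 - ((j : ℤ) + 1) = (n : ℤ) - j by ring]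
      have D : ∀ m : ℕ, z ((n : ℤ) + 1 + m) (-(m : ℤ)) = 0 := by
        intro m
        induction m with
        | zero => simpa using h1 ((n : ℤ) + 1) (by omega)
        | succ m ihm =>
          have hrel := hz ((n : ℤ) + 1 + m) (-(m : ℤ) - 1)
          have e1 : z ((n : ℤ) + 1 + m) (-(m : ℤ) - 1) = 0 := by
            have := ih ((n : ℤ) + 1 + m)
            rwa [show (n : ℤ) - ((n : ℤ) + 1 + m) = -(m : ℤ) - 1 by ring] at this
          have e3 : z ((n : ℤ) + 1 + m) (-(m : ℤ) - 1 + 1) = 0 := by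
            rwa [show -(m : ℤ) - 1 + 1 = -(m : ℤ) by ring]
          have e2 := zsolve2 _ _ _ hrel e1 e3
          push_cast
          rwa [show (n : ℤ) + 1 + ((m : ℤ) + 1) = (n : ℤ) + 1 + m + 1 by ring,
            show -((m : ℤ) + 1) = -(m : ℤ) - 1 by ring]
      intro k
      by_cases hk : k ≤ (n : ℤ) + 1
      · have hj : ((((n : ℤ) + 1 - k).toNat : ℤ)) = (n : ℤ) + 1 - k := by omega
        have := U (((n : ℤ) + 1 - k).toNat)
        rw [hj] at this
        rw [show (n : ℤ) + 1 - ((n : ℤ) + 1 - k) = k by ring] at this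
        push_cast
        rwa [show ((n : ℤ) + 1 - k) = (n : ℤ) + 1 - k by ring]
      · have hm : (((k - ((n : ℤ) + 1)).toNat : ℤ)) = k - ((n : ℤ) + 1) := by omega
        have := D ((k - ((n : ℤ) + 1)).toNat)
        rw [hm] at this
        rw [show (n : ℤ) + 1 + (k - ((n : ℤ) + 1)) = k by ring] at this
        push_cast
        rwa [show -(k - ((n : ℤ) + 1)) = (n : ℤ) + 1 - k by ring] at this
  have B : ∀ n : ℕ, ∀ k : ℤ, z k (-(n : ℤ) - k) = 0 := by
    intro n
    induction n with
    | zero => intro k; simpa using h0 k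
    | succ n ih =>
      intro k
      have hrel := hz k (-(n : ℤ) - 1 - k)
      have e2 : z (k + 1) (-(n : ℤ) - 1 - k) = 0 := by
        have := ih (k + 1)
        rwa [show -(n : ℤ) - (k + 1) = -(n : ℤ) - 1 - k by ring] at this
      have e3 : z k (-(n : ℤ) - 1 - k + 1) = 0 := by
        have := ih k
        rwa [show -(n : ℤ) - k = -(n : ℤ) - 1 - k + 1 by ring] at this
      have := zsolve1 _ _ _ hrel e2 e3
      push_cast
      rwa [show -((n : ℤ) + 1) - k = -(n : ℤ) - 1 - k by ring]
  intro k l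
  rcases le_or_gt 0 (k + l) with h | h
  · have := A (k + l).toNat k
    rwa [show (((k + l).toNat : ℤ)) - k = l by omega] at this
  · have := B (-(k + l)).toNat k
    rwa [show -(((-(k + l)).toNat : ℤ)) - k = l by omega] at this

def upSeq (prev : ℤ → ZMod 2) (a : ℤ) (v : ZMod 2) : ℕ → ZMod 2
  | 0 => v
  | (j + 1) => prev (a - (j + 1)) + upSeq prev a v j

def dnSeq (prev : ℤ → ZMod 2) (a : ℤ) (v : ZMod 2) : ℕ → ZMod 2
  | 0 => v
  | (j + 1) => prev (a + j) + dnSeq prev a v j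

def stepFun (prev : ℤ → ZMod 2) (a : ℤ) (v : ZMod 2) (k : ℤ) : ZMod 2 :=
  if k ≤ a then upSeq prev a v (a - k).toNat else dnSeq prev a v (k - a).toNat

lemma stepFun_anchor (prev : ℤ → ZMod 2) (a : ℤ) (v : ZMod 2) :
    stepFun prev a v a = v := by
  simp [stepFun, upSeq]

lemma z2a : ∀ a b : ZMod 2, (a + b) + b = a := by decide
lemma z2b : ∀ a b : ZMod 2, b + (a + b) = a := by decide

lemma upSeq_succ (prev : ℤ → ZMod 2) (a : ℤ) (v : ZMod 2) (j : ℕ) :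
    upSeq prev a v (j + 1) = prev (a - ((j : ℤ) + 1)) + upSeq prev a v j := rfl

lemma dnSeq_succ (prev : ℤ → ZMod 2) (a : ℤ) (v : ZMod 2) (j : ℕ) :
    dnSeq prev a v (j + 1) = prev (a + (j : ℤ)) + dnSeq prev a v j := rfl

lemma stepFun_rel (prev : ℤ → ZMod 2) (a : ℤ) (v : ZMod 2) (k : ℤ) :
    stepFun prev a v k + stepFun prev a v (k + 1) = prev k := by
  rcases lt_trichotomy k a with hk | hk | hk
  · have h1 : k ≤ a := le_of_lt hk
    have h2 : k + 1 ≤ a := hk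
    have hm : (a - k).toNat = (a - (k + 1)).toNat + 1 := by omega
    simp only [stepFun, if_pos h1, if_pos h2, hm, upSeq_succ]
    rw [show a - (((a - (k + 1)).toNat : ℤ) + 1) = k by omega]
    exact z2a _ _
  · subst hk
    have h2 : ¬ (k + 1 ≤ k) := by omega
    simp only [stepFun, if_pos (le_refl k), if_neg h2,
      show (k - k).toNat = 0 by omega, show (k + 1 - k).toNat = 0 + 1 by omega,
      upSeq, dnSeq_succ]
    rw [show k + ((0 : ℕ) : ℤ) = k by simp]
    exact z2b _ _
  · have h1 : ¬ (k ≤ a) := by omega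
    have h2 : ¬ (k + 1 ≤ a) := by omega
    have hm : (k + 1 - a).toNat = (k - a).toNat + 1 := by omega
    simp only [stepFun, if_neg h1, if_neg h2, hm, dnSeq_succ]
    rw [show a + ((k - a).toNat : ℤ) = k by omega]
    exact z2b _ _

def diagPos (g0 : ℤ → ZMod 2) (v : ℕ → ZMod 2) : ℕ → ℤ → ZMod 2
  | 0 => g0
  | (n + 1) => stepFun (diagPos g0 v n) ((n : ℤ) + 1) (v n)

def diagNeg (g0 : ℤ → ZMod 2) : ℕ → ℤ → ZMod 2
  | 0 => g0
  | (n + 1) => fun k => diagNeg g0 n k + diagNeg g0 n (k + 1)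

def build (g0 : ℤ → ZMod 2) (v : ℕ → ZMod 2) (k l : ℤ) : ZMod 2 :=
  if 0 ≤ k + l then diagPos g0 v (k + l).toNat k else diagNeg g0 (-(k + l)).toNat k

lemma build_threeDot (g0 : ℤ → ZMod 2) (v : ℕ → ZMod 2) : threeDot (build g0 v) := by
  intro k l
  by_cases h : (0 : ℤ) ≤ k + l
  · have h1 : (0 : ℤ) ≤ k + 1 + l := by omega
    have h2 : (0 : ℤ) ≤ k + (l + 1) := by omega
    have e1 : (k + 1 + l).toNat = (k + l).toNat + 1 := by omega
    have e2 : (k + (l + 1)).toNat = (k + l).toNat + 1 := by omega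
    simp only [build, if_pos h, if_pos h1, if_pos h2, e1, e2]
    set n := (k + l).toNat with hn
    show diagPos g0 v n k + diagPos g0 v (n + 1) (k + 1) + diagPos g0 v (n + 1) k = 0
    have hrel := stepFun_rel (diagPos g0 v n) ((n : ℤ) + 1) (v n) k
    simp only [diagPos]
    exact zrel1 _ _ _ hrel
  · by_cases h1 : k + l = -1
    · have hy : build g0 v (k + 1) l = g0 (k + 1) := by
        have hpos : (0 : ℤ) ≤ k + 1 + l := by omega
        simp only [build, if_pos hpos, show (k + 1 + l).toNat = 0 by omega, diagPos]
      have hz' : build g0 v k (l + 1) = g0 k := by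
        have hpos : (0 : ℤ) ≤ k + (l + 1) := by omega
        simp only [build, if_pos hpos, show (k + (l + 1)).toNat = 0 by omega, diagPos]
      have hx : build g0 v k l = g0 k + g0 (k + 1) := by
        simp only [build, if_neg h, show (-(k + l)).toNat = 0 + 1 by omega, diagNeg]
      rw [hx, hy, hz']
      exact zrel2 _ _
    · have hne1 : ¬ ((0 : ℤ) ≤ k + 1 + l) := by omega
      have hne2 : ¬ ((0 : ℤ) ≤ k + (l + 1)) := by omega
      have m1 : (-(k + 1 + l)).toNat = (-(k + l + 1)).toNat := by omega
      have m2 : (-(k + (l + 1))).toNat = (-(k + l + 1)).toNat := by omega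
      have hm : (-(k + l)).toNat = (-(k + l + 1)).toNat + 1 := by omega
      simp only [build, if_neg h, if_neg hne1, if_neg hne2, m1, m2, hm, diagNeg]
      exact zrel2 _ _

lemma build_diag (g0 : ℤ → ZMod 2) (v : ℕ → ZMod 2) (k : ℤ) :
    build g0 v k (-k) = g0 k := by
  simp [build, diagPos]

lemma build_axis (g0 : ℤ → ZMod 2) (v : ℕ → ZMod 2) (n : ℕ) :
    build g0 v ((n : ℤ) + 1) 0 = v n := by
  have h : (0:ℤ) ≤ (n : ℤ) + 1 + 0 := by omega
  have h2 : ((n : ℤ) + 1 + 0).toNat = n + 1 := by omega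
  simp only [build, if_pos h, h2, diagPos]
  exact stepFun_anchor _ _ _

end Stmt1Aux

/-- Restriction to `P` is a bijection (in fact a group isomorphism)
from `X` onto `(ℤ/2ℤ)^P`. -/
theorem stmt1 :
    Function.Bijective (fun (x : {x : Config // threeDot x}) =>
      (fun p : Pset => x.1 p.1.1 p.1.2)) ∧
    ∀ x y : Config, threeDot x → threeDot y → ∀ p : Pset,
      (x + y) p.1.1 p.1.2 = x p.1.1 p.1.2 + y p.1.1 p.1.2 := by
  constructor
  · constructor
    · rintro ⟨x, hx⟩ ⟨y, hy⟩ h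
      have hP : ∀ p : Pset, x p.1.1 p.1.2 = y p.1.1 p.1.2 := fun p => congrFun h p
      have hz3 : threeDot (fun k l => x k l + y k l) := fun k l =>
        Stmt1Aux.zsum _ _ _ _ _ _ (hx k l) (hy k l)
      have h0 : ∀ k : ℤ, x k (-k) + y k (-k) = 0 := fun k =>
        Stmt1Aux.zeq' _ _ (hP ⟨(k, -k), Or.inl rfl⟩)
      have h1 : ∀ l : ℤ, 1 ≤ l → x l 0 + y l 0 = 0 := fun l hl =>
        Stmt1Aux.zeq' _ _ (hP ⟨(l, 0), Or.inr ⟨hl, rfl⟩⟩)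
      have hall := Stmt1Aux.zero_of _ hz3 h0 h1
      apply Subtype.ext
      funext k l
      exact Stmt1Aux.zeq _ _ (hall k l)
    · intro f
      refine ⟨⟨Stmt1Aux.build (fun k => f ⟨(k, -k), Or.inl rfl⟩)
        (fun n => f ⟨((n : ℤ) + 1, 0), Or.inr ⟨by omega, rfl⟩⟩),
        Stmt1Aux.build_threeDot _ _⟩, ?_⟩
      funext p
      obtain ⟨⟨a, b⟩, hp⟩ := p
      rcases hp with hd | ⟨h1, h2⟩
      · have hd' : b = -a := hd
        subst hd'
        exact Stmt1Aux.build_diag _ _ a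
      · have h2' : b = 0 := h2
        subst h2'
        obtain ⟨n, hn⟩ : ∃ n : ℕ, a = (n : ℤ) + 1 := by
          have : (1 : ℤ) ≤ a := h1
          exact ⟨(a - 1).toNat, by omega⟩
        subst hn
        exact Stmt1Aux.build_axis
          (fun k => f ⟨(k, -k), Or.inl rfl⟩)
          (fun n => f ⟨((n : ℤ) + 1, 0), Or.inr ⟨by omega, rfl⟩⟩) n
  · intro x y hx hy p
    rfl
end

section
/- Let y = (y_{k,l})_{k+l ≤ 0} be a Z/2Z-valued family satisfying y_{k,l}+y_{k+1,l}+y_{k,l+1}=0 whenever k+l+1 ≤ 0, with y_{0,0}=1 and y_{h,-h}=1 for some h ≥ 0. Then there exists x in X extending y (i.e., x_{k,l}=y_{k,l} for k+l ≤ 0) such that the forward σ-trajectories of x and T^h S^{-h} x meet: there exist natural numbers p, q with σ^p(x) = σ^q(T^h S^{-h} x). -/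
open MeasureTheory Filter

/-!
Build `x` antidiagonal by antidiagonal: over `ℤ/2ℤ` the three-dot relation says that each
antidiagonal is a discrete antiderivative of the previous one, and we normalise it to vanish in
column `h + 1`. Then column `h + 1` of `x` is zero from row `-h` on, so column `h` is constantly `1`
there and the σ-trajectory of `T^h S^{-h} x` just climbs column `h`. On the other hand, a
σ-trajectory in `X` that stays in column `a` forever forces column `a + 1`, hence every column to
its right, to vanish eventually. Column `h` does not vanish, so the trajectory of `x` reaches
column `h` and from then on agrees with the other one.
-/

open Finset Function

section Antideriv

variable {M R : Type*}

noncomputable def antideriv [AddCommMonoid M] (b : ℤ) (f : ℤ → M) (k : ℤ) : M :=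
  ∑ i ∈ Ico (min k b) (max k b), f i

@[simp]
lemma antideriv_self [AddCommMonoid M] (b : ℤ) (f : ℤ → M) : antideriv b f b = 0 := by
  simp [antideriv]

lemma antideriv_add_antideriv_add_one [Ring R] [CharP R 2] (b : ℤ) (f : ℤ → R) (k : ℤ) :
    antideriv b f k + antideriv b f (k + 1) = f k := by
  rcases lt_or_ge k b with hk | hk
  · rw [antideriv, antideriv, min_eq_left hk.le, max_eq_right hk.le,
      min_eq_left (Int.add_one_le_of_lt hk), max_eq_right (Int.add_one_le_of_lt hk),
      ← insert_Ico_add_one_left_eq_Ico hk, sum_insert (by simp), add_assoc,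
      CharTwo.add_self_eq_zero, add_zero]
  · rw [antideriv, antideriv, min_eq_right hk, max_eq_left hk,
      min_eq_right (by omega), max_eq_left (by omega),
      ← insert_Ico_right_eq_Ico_add_one hk, sum_insert right_notMem_Ico, add_left_comm,
      CharTwo.add_self_eq_zero, add_zero]

end Antideriv

noncomputable def extendPast (b : ℤ) (y : Config) : Config := fun k l =>
  if k + l ≤ 0 then y k l else (antideriv b)^[(k + l).toNat] (fun i => y i (-i)) k

section ExtendPast

variable {b : ℤ} {y : Config}

lemma extendPast_of_nonpos {k l : ℤ} (hkl : k + l ≤ 0) : extendPast b y k l = y k l :=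
  if_pos hkl

lemma extendPast_eq_iterate {k l : ℤ} {n : ℕ} (hkl : k + l = n) :
    extendPast b y k l = (antideriv b)^[n] (fun i => y i (-i)) k := by
  rcases n.eq_zero_or_pos with rfl | hn
  · rw [extendPast_of_nonpos hkl.le, show l = -k by omega, iterate_zero_apply]
  · rw [extendPast, if_neg (by omega), show (k + l).toNat = n by omega]

lemma extendPast_self_of_pos {l : ℤ} (hl : 0 < b + l) : extendPast b y b l = 0 := by
  rw [extendPast_eq_iterate (n := (b + l - 1).toNat + 1) (by omega), iterate_succ_apply',
    antideriv_self]

lemma threeDot_extendPast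
    (hy : ∀ k l : ℤ, k + l + 1 ≤ 0 → y k l + y (k + 1) l + y k (l + 1) = 0) :
    threeDot (extendPast b y) := by
  intro k l
  rcases lt_or_ge (k + l) 0 with hkl | hkl
  · rw [extendPast_of_nonpos (by omega), extendPast_of_nonpos (by omega),
      extendPast_of_nonpos (by omega)]
    exact hy k l (by omega)
  · obtain ⟨n, hn⟩ : ∃ n : ℕ, k + l = n := ⟨(k + l).toNat, by omega⟩
    rw [extendPast_eq_iterate hn, extendPast_eq_iterate (n := n + 1) (by omega),
      extendPast_eq_iterate (n := n + 1) (by omega), iterate_succ_apply', add_assoc,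
      add_comm (antideriv _ _ _), antideriv_add_antideriv_add_one, CharTwo.add_self_eq_zero]

end ExtendPast

section Columns

variable {x : Config} {c r : ℤ}

lemma threeDot.col_add_one_eq_zero (hx : threeDot x) (hc : ∀ l ≥ r, x c l = 0) :
    ∀ l ≥ r, x (c + 1) l = 0 := by
  intro l hl
  linear_combination hx c l - hc l hl - hc (l + 1) (by omega)

lemma threeDot.col_eq_zero_of_le (hx : threeDot x) (hc : ∀ l ≥ r, x c l = 0) :
    ∀ c' ≥ c, ∀ l ≥ r, x c' l = 0 :=
  Int.leInduction hc fun _ _ ih => hx.col_add_one_eq_zero ih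

lemma threeDot.col_eq_of_col_add_one_eq_zero (hx : threeDot x)
    (hc : ∀ l ≥ r, x (c + 1) l = 0) : ∀ l ≥ r, x c l = x c r :=
  Int.leInduction rfl fun l hl ih => by
    linear_combination hx c l - hc l hl - ih - x c r * (CharTwo.two_eq_zero (R := ZMod 2))

end Columns

def walk (x : Config) (p : ℤ × ℤ) : ℤ × ℤ :=
  if x (p.1 + 1) p.2 = 1 then (p.1 + 1, p.2) else (p.1, p.2 + 1)

lemma shift_zero (x : Config) : shift 0 0 x = x := by
  funext k l
  simp [shift]

lemma sig_shift (x : Config) (p : ℤ × ℤ) :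
    sig (shift p.1 p.2 x) = shift (walk x p).1 (walk x p).2 x := by
  have hcoord : shift p.1 p.2 x 1 0 = x (p.1 + 1) p.2 := by simp [shift, add_comm]
  unfold sig walk
  rw [hcoord]
  split_ifs <;> funext k l <;> simp only [Tm, Sm, shift] <;> ring_nf

lemma sig_iterate_shift (x : Config) (a b : ℤ) (n : ℕ) :
    sig^[n] (shift a b x) = shift ((walk x)^[n] (a, b)).1 ((walk x)^[n] (a, b)).2 x :=
  ((Semiconj.iterate_right (f := fun q : ℤ × ℤ => shift q.1 q.2 x)
    (fun q => (sig_shift x q).symm) n) (a, b)).symm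

lemma zmod_two_eq_zero_of_ne_one : ∀ a : ZMod 2, a ≠ 1 → a = 0 := by decide

section Walk

variable {x : Config}

lemma walk_of_eq_one {p : ℤ × ℤ} (h : x (p.1 + 1) p.2 = 1) : walk x p = (p.1 + 1, p.2) :=
  if_pos h

lemma walk_of_ne_one {p : ℤ × ℤ} (h : x (p.1 + 1) p.2 ≠ 1) : walk x p = (p.1, p.2 + 1) :=
  if_neg h

lemma iterate_walk_fst_add_snd (p : ℤ × ℤ) (n : ℕ) :
    ((walk x)^[n] p).1 + ((walk x)^[n] p).2 = p.1 + p.2 + n := by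
  induction n with
  | zero => simp
  | succ n ih =>
    rw [iterate_succ_apply', walk]
    split_ifs <;> dsimp only <;> push_cast <;> linarith

lemma iterate_walk_of_ne_one {p : ℤ × ℤ} (h : ∀ n : ℕ, x (p.1 + 1) (p.2 + n) ≠ 1) (n : ℕ) :
    (walk x)^[n] p = (p.1, p.2 + n) := by
  induction n with
  | zero => simp
  | succ n ih =>
    rw [iterate_succ_apply', ih, walk_of_ne_one (h n)]
    push_cast
    ring_nf

lemma threeDot.exists_iterate_walk_fst_eq_add_one (hx : threeDot x) {c : ℤ}
    (hc : ∀ r, ∃ l ≥ r, x c l ≠ 0) {p : ℤ × ℤ} (hp : p.1 < c) :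
    ∃ n, ((walk x)^[n] p).1 = p.1 + 1 := by
  by_contra! hne
  have hstay : ∀ n : ℕ, (walk x)^[n] p = (p.1, p.2 + n) := by
    intro n
    induction n with
    | zero => simp
    | succ n ih =>
      by_cases h1 : x (p.1 + 1) (p.2 + n) = 1
      · refine absurd ?_ (hne (n + 1))
        rw [iterate_succ_apply', ih, walk_of_eq_one h1]
      · rw [iterate_succ_apply', ih, walk_of_ne_one h1]
        push_cast
        ring_nf
  have hzero : ∀ l ≥ p.2, x (p.1 + 1) l = 0 := by
    intro l hl
    obtain ⟨n, rfl⟩ : ∃ n : ℕ, l = p.2 + n := ⟨(l - p.2).toNat, by omega⟩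
    refine zmod_two_eq_zero_of_ne_one _ fun h1 => hne (n + 1) ?_
    rw [iterate_succ_apply', hstay, walk_of_eq_one h1]
  obtain ⟨l, hl, hcl⟩ := hc p.2
  exact hcl (hx.col_eq_zero_of_le hzero c (by omega) l hl)

lemma threeDot.exists_iterate_walk_fst_eq (hx : threeDot x) {c : ℤ}
    (hc : ∀ r, ∃ l ≥ r, x c l ≠ 0) {p : ℤ × ℤ} (hp : p.1 ≤ c) :
    ∃ n, ((walk x)^[n] p).1 = c := by
  obtain ⟨d, hd⟩ : ∃ d : ℕ, c = p.1 + d := ⟨(c - p.1).toNat, by omega⟩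
  induction d generalizing p with
  | zero => exact ⟨0, by simpa using hd.symm⟩
  | succ d ih =>
    obtain ⟨n, hn⟩ := hx.exists_iterate_walk_fst_eq_add_one hc (p := p) (by omega)
    obtain ⟨m, hm⟩ := ih (p := (walk x)^[n] p) (by omega) (by omega)
    exact ⟨m + n, by rwa [iterate_add_apply]⟩

end Walk

theorem stmt3_general (y : Config)
    (hy : ∀ k l : ℤ, k + l + 1 ≤ 0 → y k l + y (k + 1) l + y k (l + 1) = 0)
    (h : ℕ) (hh : y (h : ℤ) (-(h : ℤ)) = 1) :
    ∃ x : Config, threeDot x ∧ (∀ k l : ℤ, k + l ≤ 0 → x k l = y k l) ∧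
      ∃ p q : ℕ, sig^[p] x = sig^[q] (shift (h : ℤ) (-(h : ℤ)) x) := by
  set x := extendPast (h + 1) y with hx_def
  have hx : threeDot x := threeDot_extendPast hy
  have hright : ∀ l ≥ -(h : ℤ), x (h + 1) l = 0 := fun l hl => extendPast_self_of_pos (by omega)
  have hcol : ∀ l ≥ -(h : ℤ), x h l = 1 := fun l hl => by
    rw [hx.col_eq_of_col_add_one_eq_zero hright l hl, hx_def, extendPast_of_nonpos (by omega), hh]
  obtain ⟨m, hm⟩ := hx.exists_iterate_walk_fst_eq
    (fun r => ⟨max r (-h), le_max_left _ _, by rw [hcol _ (le_max_right _ _)]; decide⟩)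
    (p := (0, 0)) (by simp)
  have hsnd : ((walk x)^[m] (0, 0)).2 = -h + m := by
    have := iterate_walk_fst_add_snd (x := x) (0, 0) m
    simp only [hm] at this
    omega
  have hstay := iterate_walk_of_ne_one (x := x) (p := ((h : ℤ), -(h : ℤ)))
    (fun n => by rw [hright _ (by omega)]; decide) m
  refine ⟨x, hx, fun k l hkl => extendPast_of_nonpos hkl, m, m, ?_⟩
  calc sig^[m] x = shift h (-h + m) x := by
        simpa only [shift_zero, hm, hsnd] using sig_iterate_shift x 0 0 m
    _ = sig^[m] (shift h (-h) x) := by rw [sig_iterate_shift, hstay]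

/-- Prolongation lemma: given a past `y` with `y_{0,0} = 1` and `y_{h,-h} = 1`,
there is an extension `x ∈ X` of `y` whose forward σ-trajectory meets that of
`T^h S^{-h} x`. -/
theorem stmt3 (y : Config)
    (hy : ∀ k l : ℤ, k + l + 1 ≤ 0 → y k l + y (k + 1) l + y k (l + 1) = 0)
    (h0 : y 0 0 = 1) (h : ℕ) (hh : y (h : ℤ) (-(h : ℤ)) = 1) :
    ∃ x : Config, threeDot x ∧ (∀ k l : ℤ, k + l ≤ 0 → x k l = y k l) ∧
      ∃ p q : ℕ, sig^[p] x = sig^[q] (shift (h : ℤ) (-(h : ℤ)) x) :=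
  stmt3_general y hy h hh
end

section
/- X_1 ∩ T X_1 = X_1 ∩ S X_1 = X_1 ∩ TS X_1 = {0}, where X_1 = {x in X : x_{2k,2l} = 0 for all k,l in Z}. -/
open MeasureTheory Filter

/-- `X₁` : configurations of `X` vanishing at all even-even coordinates. -/
def X1set : Set Config := {x | threeDot x ∧ ∀ k l : ℤ, x (2 * k) (2 * l) = 0}

lemma zero_of_even_rows (y : Config) (ht : threeDot y)
    (h : ∀ a l : ℤ, y a (2 * l) = 0) : y = 0 := by
  funext a b
  obtain ⟨l, hl | hl⟩ := Int.even_or_odd' b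
  · simp [hl, h]
  · have h3 := ht a (2 * l)
    rw [h a l, h (a + 1) l] at h3
    simp only [hl]
    simpa using h3

lemma zero_of_even_cols (y : Config) (ht : threeDot y)
    (h : ∀ k b : ℤ, y (2 * k) b = 0) : y = 0 := by
  funext a b
  obtain ⟨k, hk | hk⟩ := Int.even_or_odd' a
  · simp [hk, h]
  · have h3 := ht (2 * k) b
    rw [h k b, h k (b + 1)] at h3
    simp only [hk]
    simpa using h3

lemma zero_mem_X1 : (0 : Config) ∈ X1set :=
  ⟨fun _ _ => by simp [Pi.zero_apply], fun _ _ => rfl⟩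

/-- `X₁ ∩ T X₁ = X₁ ∩ S X₁ = X₁ ∩ TS X₁ = {0}`. -/
theorem stmt15 :
    X1set ∩ (Tm '' X1set) = {0} ∧
    X1set ∩ (Sm '' X1set) = {0} ∧
    X1set ∩ ((Tm ∘ Sm) '' X1set) = {0} := by
  refine ⟨?_, ?_, ?_⟩
  · ext y
    constructor
    · rintro ⟨hy, x, hx, rfl⟩
      have hrows : ∀ a l : ℤ, (Tm x) a (2 * l) = 0 := by
        intro a l
        obtain ⟨k, hk | hk⟩ := Int.even_or_odd' a
        · rw [hk]; exact hy.2 k l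
        · show x (a + 1) (2 * l + 0) = 0
          have := hx.2 (k + 1) l
          rw [hk]; convert this using 2 <;> ring
      simpa using zero_of_even_rows _ hy.1 hrows
    · rintro rfl
      exact ⟨zero_mem_X1, 0, zero_mem_X1, rfl⟩
  · ext y
    constructor
    · rintro ⟨hy, x, hx, rfl⟩
      have hcols : ∀ k b : ℤ, (Sm x) (2 * k) b = 0 := by
        intro k b
        obtain ⟨l, hl | hl⟩ := Int.even_or_odd' b
        · rw [hl]; exact hy.2 k l
        · show x (2 * k + 0) (b + 1) = 0
          have := hx.2 k (l + 1)
          rw [hl]; convert this using 2 <;> ring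
      simpa using zero_of_even_cols _ hy.1 hcols
    · rintro rfl
      exact ⟨zero_mem_X1, 0, zero_mem_X1, rfl⟩
  · ext y
    constructor
    · rintro ⟨hy, x, hx, rfl⟩
      set z := (Tm ∘ Sm) x with hz
      have hzx : ∀ a b : ℤ, z a b = x (a + 1) (b + 1) := by
        intro a b
        show x (a + 1 + 0) (b + 0 + 1) = x (a + 1) (b + 1)
        ring_nf
      have hoo : ∀ k l : ℤ, z (2 * k + 1) (2 * l + 1) = 0 := by
        intro k l
        rw [hzx]
        have := hx.2 (k + 1) (l + 1)
        convert this using 2 <;> ring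
      have hcols : ∀ k b : ℤ, z (2 * k) b = 0 := by
        intro k b
        obtain ⟨l, hl | hl⟩ := Int.even_or_odd' b
        · rw [hl]; exact hy.2 k l
        · -- b = 2l+1 : use threeDot at (2k, 2l+1)
          have h3 := hy.1 (2 * k) (2 * l + 1)
          rw [hoo k l] at h3
          have hee : z (2 * k) (2 * l + 1 + 1) = 0 := by
            have := hy.2 k (l + 1)
            convert this using 2; ring
          rw [hee] at h3
          rw [hl]
          simpa using h3
      simpa using zero_of_even_cols _ hy.1 hcols
    · rintro rfl
      exact ⟨zero_mem_X1, 0, zero_mem_X1, rfl⟩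
end
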